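/- The map δ_a (a ∈ ℝⁿ, ‖a‖ < 1) maps the open unit ball into itself: if ‖x‖ < 1 then ‖δ_a(x)‖ < 1. -/

import Mathlib

open scoped RealInnerProductSpace

noncomputable section

def delta {n : ℕ} (a x : EuclideanSpace ℝ (Fin n)) : EuclideanSpace ℝ (Fin n) :=
  (‖x‖ ^ 2 * ‖a‖ ^ 2 - 2 * ⟪x, a⟫ + 1)⁻¹ •
    ((‖a‖ ^ 2 - 1) • x + (1 + ‖x‖ ^ 2) • a - (2 * ⟪x, a⟫) • a)

/-! With `D = ‖x‖²‖a‖² - 2⟪x, a⟫ + 1`, the numerator of `δ_a x` has squared norm `D ‖x - a‖²`,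
so `‖δ_a x‖² = ‖x - a‖² / D`. Since `D = ‖x - a‖² + (1 - ‖x‖²)(1 - ‖a‖²)`, this gives
`1 - ‖δ_a x‖² = (1 - ‖x‖²)(1 - ‖a‖²) / D`, which is positive on the open unit ball. -/

section InnerProductSpace

variable {E : Type*} [NormedAddCommGroup E] [InnerProductSpace ℝ E] (a x : E)

theorem delta_denom_eq :
    ‖x‖ ^ 2 * ‖a‖ ^ 2 - 2 * ⟪x, a⟫ + 1 = ‖x - a‖ ^ 2 + (1 - ‖x‖ ^ 2) * (1 - ‖a‖ ^ 2) := by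
  rw [norm_sub_sq_real]
  ring

theorem norm_delta_numerator_sq :
    ‖(‖a‖ ^ 2 - 1) • x + (1 + ‖x‖ ^ 2) • a - (2 * ⟪x, a⟫) • a‖ ^ 2 =
      (‖x‖ ^ 2 * ‖a‖ ^ 2 - 2 * ⟪x, a⟫ + 1) * ‖x - a‖ ^ 2 := by
  have hcollect : (‖a‖ ^ 2 - 1) • x + (1 + ‖x‖ ^ 2) • a - (2 * ⟪x, a⟫) • a =
      (‖a‖ ^ 2 - 1) • x + (1 + ‖x‖ ^ 2 - 2 * ⟪x, a⟫) • a := by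
    module
  rw [hcollect, norm_add_sq_real, norm_sub_sq_real, norm_smul, norm_smul,
    real_inner_smul_left, real_inner_smul_right]
  simp only [Real.norm_eq_abs, mul_pow, sq_abs]
  ring

end InnerProductSpace

theorem one_sub_norm_delta_sq {n : ℕ} {a x : EuclideanSpace ℝ (Fin n)}
    (hD : ‖x‖ ^ 2 * ‖a‖ ^ 2 - 2 * ⟪x, a⟫ + 1 ≠ 0) :
    1 - ‖delta a x‖ ^ 2 =
      (1 - ‖x‖ ^ 2) * (1 - ‖a‖ ^ 2) / (‖x‖ ^ 2 * ‖a‖ ^ 2 - 2 * ⟪x, a⟫ + 1) := by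
  rw [delta, norm_smul, mul_pow, norm_delta_numerator_sq, norm_inv, Real.norm_eq_abs, inv_pow,
    sq_abs]
  field_simp
  linear_combination delta_denom_eq a x

theorem stmt13 (n : ℕ) (a : EuclideanSpace ℝ (Fin n)) (ha : ‖a‖ < 1)
    (x : EuclideanSpace ℝ (Fin n)) (hx : ‖x‖ < 1) : ‖delta a x‖ < 1 := by
  have hx' : 0 < 1 - ‖x‖ ^ 2 := sub_pos.2 ((sq_lt_one_iff₀ (norm_nonneg x)).2 hx)
  have ha' : 0 < 1 - ‖a‖ ^ 2 := sub_pos.2 ((sq_lt_one_iff₀ (norm_nonneg a)).2 ha)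
  have hD : 0 < ‖x‖ ^ 2 * ‖a‖ ^ 2 - 2 * ⟪x, a⟫ + 1 := by
    rw [delta_denom_eq]
    positivity
  have hδ : 0 < 1 - ‖delta a x‖ ^ 2 := by
    rw [one_sub_norm_delta_sq hD.ne']
    positivity
  exact (sq_lt_one_iff₀ (norm_nonneg _)).1 (sub_pos.1 hδ)

end
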